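/- arXiv:1902.04693 — 2 statements merged into one kernel-verified Lean document; each statement's English description precedes it below -/
import Mathlib

section
/- Let P_i = (x_i, y_i) ∈ ℝ², i = 1,2,3,4, and define a₁ = x₂−x₁, a₂ = x₄−x₁, a₃ = x₁−x₂+x₃−x₄, b₁ = y₂−y₁, b₂ = y₄−y₁, b₃ = y₁−y₂+y₃−y₄, and the Jacobian matrix J(ξ,η) = [[a₁+a₃η, a₂+a₃ξ],[b₁+b₃η, b₂+b₃ξ]]. Let û(ξ,η) = u₁(1−ξ)(1−η) + u₂ξ(1−η) + u₃ξη + u₄(1−ξ)η for real numbers u₁,u₂,u₃,u₄, and set q₁ = (y₂−y₄, x₄−x₂) and q₂ = (y₃−y₁, x₁−x₃). Then J(1/2,1/2)^T · ((u₁−u₃)·q₁ + (u₂−u₄)·q₂) = 2·det J(1/2,1/2) · ∇û(1/2,1/2), where ∇û(1/2,1/2) = ((u₂+u₃−u₁−u₄)/2, (u₃+u₄−u₁−u₂)/2). Consequently, if det J(1/2,1/2) ≠ 0, the gradient of the isoparametric bilinear interpolant u_h = û ∘ F^{-1} at the barycenter Q = F(1/2,1/2) equals ((u₁−u₃)/(2·det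 J(1/2,1/2)))·q₁ + ((u₂−u₄)/(2·det J(1/2,1/2)))·q₂. -/
/-!
At the barycentre the columns of `J` are `(d₁₃ ∓ d₂₄)/2`, where `d₁₃ = P₃ − P₁` and
`d₂₄ = P₄ − P₂` are the diagonals, so `det J = ½ d₁₃ × d₂₄`. As `q₁`, `q₂` are `d₂₄`, `d₁₃`
turned by a right angle, `Jᵀ q₁ = −det J · (1, 1)` and `Jᵀ q₂ = det J · (1, −1)`, which gives
the identity. For the gradient, `F` and `û` are both biaffine in `(ξ, η)`, with derivatives
`J` and `∇û`; the chain rule applied to `u_h ∘ F = û` gives `Du_h(Q) ∘ J = ∇û`, hence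
`∇u_h(Q) = J⁻ᵀ ∇û`, and the identity computes `J⁻ᵀ ∇û`.
-/

open Matrix

def biaffineMap {E : Type*} [NormedAddCommGroup E] [NormedSpace ℝ E] (c₀ c₁ c₂ c₃ : E)
    (w : Fin 2 → ℝ) : E :=
  c₀ + w 0 • c₁ + w 1 • c₂ + (w 0 * w 1) • c₃

theorem hasFDerivAt_biaffineMap {E : Type*} [NormedAddCommGroup E] [NormedSpace ℝ E]
    (c₀ c₁ c₂ c₃ : E) (w : Fin 2 → ℝ) :
    HasFDerivAt (biaffineMap c₀ c₁ c₂ c₃)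
      ((ContinuousLinearMap.proj (R := ℝ) (φ := fun _ : Fin 2 => ℝ) 0).smulRight (c₁ + w 1 • c₃)
        + (ContinuousLinearMap.proj 1).smulRight (c₂ + w 0 • c₃)) w := by
  have h₀ := hasFDerivAt_apply (𝕜 := ℝ) (0 : Fin 2) w
  have h₁ := hasFDerivAt_apply (𝕜 := ℝ) (1 : Fin 2) w
  refine ((((hasFDerivAt_const c₀ w).add (h₀.smul_const c₁)).add (h₁.smul_const c₂)).add
    ((h₀.mul h₁).smul_const c₃)).congr_fderiv ?_
  ext v
  simp only [_root_.add_apply, ContinuousLinearMap.smulRight_apply,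
    ContinuousLinearMap.proj_apply, _root_.smul_apply, smul_eq_mul, zero_add]
  module

theorem fderiv_apply_eq_vecMul_inv_dotProduct {ι : Type*} [Fintype ι] [DecidableEq ι]
    {F : (ι → ℝ) → ι → ℝ} {g : (ι → ℝ) → ℝ} {p : ι → ℝ} {M : Matrix ι ι ℝ}
    {G : (ι → ℝ) →L[ℝ] ℝ} {c : ι → ℝ} (hM : IsUnit M.det)
    (hF : HasFDerivAt F M.mulVecLin.toContinuousLinearMap p)
    (hg : DifferentiableAt ℝ g (F p)) (hgF : HasFDerivAt (g ∘ F) G p)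
    (hG : ∀ y, G y = c ⬝ᵥ y) (v : ι → ℝ) :
    fderiv ℝ g (F p) v = (c ᵥ* M⁻¹) ⬝ᵥ v := by
  have hcomp : (fderiv ℝ g (F p)).comp M.mulVecLin.toContinuousLinearMap = G :=
    (hg.hasFDerivAt.comp p hF).unique hgF
  calc fderiv ℝ g (F p) v = G (M⁻¹ *ᵥ v) := by
        rw [← hcomp, ContinuousLinearMap.comp_apply]
        simp [mulVec_mulVec, mul_nonsing_inv _ hM]
    _ = (c ᵥ* M⁻¹) ⬝ᵥ v := by rw [hG, dotProduct_mulVec]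

theorem vecMul_nonsing_inv_eq_of_transpose_mulVec {K ι : Type*} [Field K] [Fintype ι]
    [DecidableEq ι] {M : Matrix ι ι K} (hM : IsUnit M.det) {w c : ι → K} {k : K} (hk : k ≠ 0)
    (h : Mᵀ *ᵥ w = k • c) : c ᵥ* M⁻¹ = k⁻¹ • w := by
  have hc : c = k⁻¹ • w ᵥ* M := by
    rw [← mulVec_transpose, h, smul_smul, inv_mul_cancel₀ hk, one_smul]
  rw [hc, smul_vecMul, vecMul_vecMul, mul_nonsing_inv _ hM, vecMul_one]

/-- Equation (3.3) of the paper: with the bilinear reference map `F`, Jacobian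
`J`, bilinear shape function `uhat`, diagonal normals `q₁, q₂`, and barycentric
gradient `∇uhat(1/2,1/2)`, we have
`J(1/2,1/2)ᵀ ((u₁−u₃) q₁ + (u₂−u₄) q₂) = 2 det J(1/2,1/2) ∇uhat(1/2,1/2)`;
consequently, when `det J(1/2,1/2) ≠ 0`, the gradient of the isoparametric
bilinear interpolant `u_h = uhat ∘ F⁻¹` at the barycenter `Q = F(1/2,1/2)` is
`((u₁−u₃)/(2 det J)) q₁ + ((u₂−u₄)/(2 det J)) q₂`. -/
theorem isoparametric_bilinear_gradient_at_barycenter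
    (x₁ x₂ x₃ x₄ y₁ y₂ y₃ y₄ u₁ u₂ u₃ u₄ : ℝ)
    (a₁ a₂ a₃ b₁ b₂ b₃ : ℝ)
    (ha₁ : a₁ = x₂ - x₁) (ha₂ : a₂ = x₄ - x₁) (ha₃ : a₃ = x₁ - x₂ + x₃ - x₄)
    (hb₁ : b₁ = y₂ - y₁) (hb₂ : b₂ = y₄ - y₁) (hb₃ : b₃ = y₁ - y₂ + y₃ - y₄)
    (J : ℝ → ℝ → Matrix (Fin 2) (Fin 2) ℝ)
    (hJ : ∀ ξ η, J ξ η = !![a₁ + a₃ * η, a₂ + a₃ * ξ; b₁ + b₃ * η, b₂ + b₃ * ξ])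
    (uhat : (Fin 2 → ℝ) → ℝ)
    (huhat : ∀ w : Fin 2 → ℝ, uhat w =
      u₁ * (1 - w 0) * (1 - w 1) + u₂ * (w 0) * (1 - w 1)
        + u₃ * (w 0) * (w 1) + u₄ * (1 - w 0) * (w 1))
    (q₁ q₂ : Fin 2 → ℝ)
    (hq₁ : q₁ = ![y₂ - y₄, x₄ - x₂]) (hq₂ : q₂ = ![y₃ - y₁, x₁ - x₃])
    (graduhat : Fin 2 → ℝ)
    (hgraduhat : graduhat = ![(u₂ + u₃ - u₁ - u₄) / 2, (u₃ + u₄ - u₁ - u₂) / 2]) :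
    (J (1/2) (1/2))ᵀ.mulVec ((u₁ - u₃) • q₁ + (u₂ - u₄) • q₂)
        = (2 * (J (1/2) (1/2)).det) • graduhat ∧
    ((J (1/2) (1/2)).det ≠ 0 →
      ∀ (F : (Fin 2 → ℝ) → (Fin 2 → ℝ)) (u_h : (Fin 2 → ℝ) → ℝ),
        (∀ w : Fin 2 → ℝ, F w =
          ![x₁ + a₁ * w 0 + a₂ * w 1 + a₃ * w 0 * w 1,
            y₁ + b₁ * w 0 + b₂ * w 1 + b₃ * w 0 * w 1]) →
        (∀ w : Fin 2 → ℝ, u_h (F w) = uhat w) →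
        DifferentiableAt ℝ u_h (F ![1/2, 1/2]) →
        ∀ v : Fin 2 → ℝ,
          fderiv ℝ u_h (F ![1/2, 1/2]) v =
            (((u₁ - u₃) / (2 * (J (1/2) (1/2)).det)) • q₁
              + ((u₂ - u₄) / (2 * (J (1/2) (1/2)).det)) • q₂) ⬝ᵥ v) := by
  set M := J (1/2) (1/2) with hM
  have key : Mᵀ *ᵥ ((u₁ - u₃) • q₁ + (u₂ - u₄) • q₂) = (2 * M.det) • graduhat := by
    subst ha₁ ha₂ ha₃ hb₁ hb₂ hb₃ hq₁ hq₂ hgraduhat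
    rw [hM, hJ]
    ext i
    fin_cases i <;> simp [mulVec, dotProduct, Fin.sum_univ_two, det_fin_two_of] <;> ring
  refine ⟨key, fun hdet F u_h hF hu hdiff v => ?_⟩
  have hF_eq : F = biaffineMap ![x₁, y₁] ![a₁, b₁] ![a₂, b₂] ![a₃, b₃] := by
    funext w
    rw [hF]
    ext i
    fin_cases i <;> simp [biaffineMap] <;> ring
  have hu_eq : u_h ∘ F = biaffineMap u₁ (u₂ - u₁) (u₄ - u₁) (u₁ - u₂ + u₃ - u₄) := by
    funext w
    simp only [Function.comp_apply, hu, huhat, biaffineMap, smul_eq_mul]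
    ring
  have hFd : HasFDerivAt F M.mulVecLin.toContinuousLinearMap ![1/2, 1/2] := by
    refine hF_eq ▸ (hasFDerivAt_biaffineMap _ _ _ _ _).congr_fderiv ?_
    ext v i
    fin_cases i <;> simp [hM, hJ, mulVec, dotProduct, Fin.sum_univ_two] <;> ring
  have hud := hasFDerivAt_biaffineMap u₁ (u₂ - u₁) (u₄ - u₁) (u₁ - u₂ + u₃ - u₄) ![1/2, 1/2]
  rw [← hu_eq] at hud
  have hM_unit : IsUnit M.det := isUnit_iff_ne_zero.2 hdet
  have hgrad := fderiv_apply_eq_vecMul_inv_dotProduct (c := graduhat) hM_unit hFd hdiff hud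
    (fun y => by
      simp only [_root_.add_apply, ContinuousLinearMap.smulRight_apply,
        ContinuousLinearMap.proj_apply, hgraduhat, dotProduct, Fin.sum_univ_two, cons_val_zero,
        cons_val_one, cons_val_fin_one, smul_eq_mul]
      ring) v
  rw [hgrad, vecMul_nonsing_inv_eq_of_transpose_mulVec hM_unit (mul_ne_zero two_ne_zero hdet) key,
    smul_add, smul_smul, smul_smul, div_eq_inv_mul, div_eq_inv_mul]
end

section
/- Let A, u₁, u₃, r⁺, r⁻, M, C, h, c be real numbers with r⁺ ≥ 0, r⁻ ≥ 0, u₁ > 0, u₃ > 0, M > 0, C > 0, h > 0, c > 0, and suppose M·u₁ ≥ c·h and M·u₃ ≥ c·h. Define the one-sided flux F₁ = A(u₁−u₃) + r⁺ − r⁻ and the nonlinear two-point flux F₁σ = (A + r⁺M/(M u₁ + C h²))·u₁ − (A + r⁻M/(M u₃ + C h²))·u₃. Then |F₁σ − F₁| ≤ (C/c)·h·(r⁺ + r⁻). -/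
/-!
Writing `d = M u + C h²`, the two-point coefficient satisfies
`(A + r M / d) u = A u + r - r C h² / d`, so `F₁σ - F₁` is the difference of the two
nonnegative corrections `r⁻ C h² / d₃` and `r⁺ C h² / d₁`. Since `d ≥ M u ≥ c h`, each
correction is at most `r C h² / (c h) = (C / c) h r`.
-/

lemma add_div_mul_eq_add_sub_div {K : Type*} [Field K] {A r M u b : K} (hd : M * u + b ≠ 0) :
    (A + r * M / (M * u + b)) * u = A * u + r - r * b / (M * u + b) := by
  field_simp
  ring

lemma mul_div_add_sq_le {K : Type*} [Field K] [LinearOrder K] [IsStrictOrderedRing K]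
    {r C h c a : K} (hr : 0 ≤ r) (hC : 0 ≤ C) (hh : 0 < h) (hc : 0 < c)
    (ha : c * h ≤ a) :
    r * (C * h ^ 2) / (a + C * h ^ 2) ≤ C / c * h * r :=
  calc r * (C * h ^ 2) / (a + C * h ^ 2)
      ≤ r * (C * h ^ 2) / (c * h) :=
        div_le_div_of_nonneg_left (by positivity) (by positivity) (by nlinarith [sq_nonneg h])
    _ = C / c * h * r := by field_simp

theorem two_point_flux_modification_bound_general
    (A u₁ u₃ rp rm M C h c : ℝ)
    (hrp : 0 ≤ rp) (hrm : 0 ≤ rm)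
    (hC : 0 < C) (hh : 0 < h) (hc : 0 < c)
    (hMu₁ : c * h ≤ M * u₁) (hMu₃ : c * h ≤ M * u₃)
    (F₁ F₁σ : ℝ)
    (hF₁ : F₁ = A * (u₁ - u₃) + rp - rm)
    (hF₁σ : F₁σ = (A + rp * M / (M * u₁ + C * h ^ 2)) * u₁
        - (A + rm * M / (M * u₃ + C * h ^ 2)) * u₃) :
    |F₁σ - F₁| ≤ (C / c) * h * (rp + rm) := by
  have hd₁ : 0 < M * u₁ + C * h ^ 2 := by nlinarith [mul_pos hc hh, sq_nonneg h]
  have hd₃ : 0 < M * u₃ + C * h ^ 2 := by nlinarith [mul_pos hc hh, sq_nonneg h]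
  rw [add_div_mul_eq_add_sub_div hd₁.ne', add_div_mul_eq_add_sub_div hd₃.ne'] at hF₁σ
  have hb₁ := mul_div_add_sq_le hrp hC.le hh hc hMu₁
  have hb₃ := mul_div_add_sq_le hrm hC.le hh hc hMu₃
  have hnn₁ : 0 ≤ rp * (C * h ^ 2) / (M * u₁ + C * h ^ 2) := by positivity
  have hnn₃ : 0 ≤ rm * (C * h ^ 2) / (M * u₃ + C * h ^ 2) := by positivity
  rw [abs_sub_le_iff]
  constructor <;> linarith

/-- Key estimate in Section 3.2 (truncation error of the nonlinear two-point
flux): with `F₁ = A(u₁−u₃) + r⁺ − r⁻` and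
`F₁σ = (A + r⁺M/(Mu₁+Ch²))u₁ − (A + r⁻M/(Mu₃+Ch²))u₃`, under `M u₁ ≥ c h`
and `M u₃ ≥ c h`, one has `|F₁σ − F₁| ≤ (C/c) h (r⁺ + r⁻)`. -/
theorem two_point_flux_modification_bound
    (A u₁ u₃ rp rm M C h c : ℝ)
    (hrp : 0 ≤ rp) (hrm : 0 ≤ rm)
    (hu₁ : 0 < u₁) (hu₃ : 0 < u₃)
    (hM : 0 < M) (hC : 0 < C) (hh : 0 < h) (hc : 0 < c)
    (hMu₁ : c * h ≤ M * u₁) (hMu₃ : c * h ≤ M * u₃)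
    (F₁ F₁σ : ℝ)
    (hF₁ : F₁ = A * (u₁ - u₃) + rp - rm)
    (hF₁σ : F₁σ = (A + rp * M / (M * u₁ + C * h ^ 2)) * u₁
        - (A + rm * M / (M * u₃ + C * h ^ 2)) * u₃) :
    |F₁σ - F₁| ≤ (C / c) * h * (rp + rm) :=
  two_point_flux_modification_bound_general A u₁ u₃ rp rm M C h c hrp hrm hC hh hc hMu₁ hMu₃ F₁ F₁σ
    hF₁ hF₁σ
end
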